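/- arXiv:1707.04186 — 2 statements merged into one kernel-verified Lean document; each statement's English description precedes it below -/
import Mathlib

section
/- Let (𝔰, μ) be a finite-dimensional solvable real Lie algebra with nilradical 𝔫. Then for every X ∈ 𝔰 and Y ∈ 𝔫, the endomorphisms ad_μ(X + Y) and ad_μ(X) of 𝔰 have the same spectrum (i.e., the same set of complex eigenvalues of their complexifications). -/
/-!
Let `I` be a nilpotent ideal. The terms `Cₖ` of the lower central series of `L` as an `I`-module
are ideals, hence preserved by every `ad X`; for `Y ∈ I`, `ad Y` maps `Cₖ` into `Cₖ₊₁`; and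
`Cₘ = 0` for some `m`. All of this survives extension of scalars to `ℂ`. So for `a ∈ ℂ` the maps
`f = a - ad (X + Y)` and `g = a - ad X` preserve the filtration and `f - g` lowers it. Then `f`
injective forces `g` injective, and symmetrically: if `g v = 0` and `v ∈ Cₖ`, then
`f v = (f - g) v ∈ Cₖ₊₁`, and `f` restricts to a bijection of `Cₖ₊₁`, so `v ∈ Cₖ₊₁`.
-/

open TensorProduct LieModule Set

namespace Module.End

variable {K V : Type*} [Field K] [AddCommGroup V] [Module K V] [FiniteDimensional K V]

theorem mem_of_apply_mem_of_injective {f : End K V} (hinj : Function.Injective f)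
    {p : Submodule K V} (hp : MapsTo f p p) {v : V} (hv : f v ∈ p) : v ∈ p := by
  have hsurj : Function.Surjective (f.restrict hp) :=
    LinearMap.injective_iff_surjective.mp fun a b hab ↦ Subtype.ext (hinj congr($hab.1))
  obtain ⟨w, hw⟩ := hsurj ⟨f v, hv⟩
  exact hinj congr($hw.1) ▸ w.2

variable {C : ℕ → Submodule K V} {m : ℕ} {f g : End K V}

theorem injective_of_sub_mapsTo_succ (hC0 : C 0 = ⊤) (hCm : C m = ⊥)
    (hf : ∀ k, MapsTo f (C k) (C k)) (hfg : ∀ k, MapsTo (f - g) (C k) (C (k + 1)))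
    (hinj : Function.Injective f) : Function.Injective g := by
  refine (injective_iff_map_eq_zero g).mpr fun v hv ↦ ?_
  have hmem : ∀ k, v ∈ C k := by
    intro k
    induction k with
    | zero => simp [hC0]
    | succ k ih =>
      refine mem_of_apply_mem_of_injective hinj (hf (k + 1)) ?_
      simpa [hv] using hfg k ih
  simpa [hCm] using hmem m

theorem isUnit_iff_of_sub_mapsTo_succ (hC0 : C 0 = ⊤) (hCm : C m = ⊥)
    (hf : ∀ k, MapsTo f (C k) (C k)) (hg : ∀ k, MapsTo g (C k) (C k))
    (hfg : ∀ k, MapsTo (f - g) (C k) (C (k + 1))) : IsUnit f ↔ IsUnit g := by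
  have hgf : ∀ k, MapsTo (g - f) (C k) (C (k + 1)) := fun k v hv ↦ by
    simpa using (C (k + 1)).neg_mem (hfg k hv)
  simp only [LinearMap.isUnit_iff_ker_eq_bot, LinearMap.ker_eq_bot]
  exact ⟨injective_of_sub_mapsTo_succ hC0 hCm hf hfg, injective_of_sub_mapsTo_succ hC0 hCm hg hgf⟩

theorem spectrum_eq_of_sub_mapsTo_succ (hC0 : C 0 = ⊤) (hCm : C m = ⊥)
    (hf : ∀ k, MapsTo f (C k) (C k)) (hg : ∀ k, MapsTo g (C k) (C k))
    (hfg : ∀ k, MapsTo (f - g) (C k) (C (k + 1))) : spectrum K f = spectrum K g := by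
  have hshift : ∀ (a : K) (h : End K V), (∀ k, MapsTo h (C k) (C k)) →
      ∀ k, MapsTo (algebraMap K (End K V) a - h) (C k) (C k) := fun a h hh k v hv ↦ by
    simpa using (C k).sub_mem ((C k).smul_mem a hv) (hh k hv)
  ext a
  refine not_congr (isUnit_iff_of_sub_mapsTo_succ hC0 hCm (hshift a f hf) (hshift a g hg) ?_)
  intro k v hv
  simpa using (C (k + 1)).neg_mem (hfg k hv)

end Module.End

namespace LieIdeal

variable {R L : Type*} [CommRing R] [LieRing L] [LieAlgebra R L] (I : LieIdeal R L)

theorem isNilpotent_iff_exists_lcs_eq_bot (M : Type*) [AddCommGroup M] [Module R M]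
    [LieRingModule L M] [LieModule R L M] :
    IsNilpotent I M ↔ ∃ k, I.lcs M k = ⊥ := by
  simp only [isNilpotent_iff R, ← LieSubmodule.toSubmodule_inj, coe_lcs_eq,
    LieSubmodule.bot_toSubmodule]

theorem lcs_succ_le_map_lowerCentralSeries (k : ℕ) :
    (I.lcs L (k + 1)).toSubmodule ≤
      (lowerCentralSeries R I I k).toSubmodule.map (I.incl : I →ₗ[R] L) := by
  induction k with
  | zero =>
    rw [lcs_succ, lowerCentralSeries_zero, LieSubmodule.top_toSubmodule, Submodule.map_top]
    exact fun x hx ↦ ⟨⟨x, I.lie_le_left ⊤ hx⟩, rfl⟩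
  | succ k ih =>
    rw [lcs_succ, LieSubmodule.lieIdeal_oper_eq_linear_span', Submodule.span_le]
    rintro _ ⟨x, hx, n, hn, rfl⟩
    obtain ⟨v, hv, rfl⟩ := ih hn
    refine ⟨⁅(⟨x, hx⟩ : I), v⁆, ?_, rfl⟩
    rw [SetLike.mem_coe, LieSubmodule.mem_toSubmodule, lowerCentralSeries_succ]
    exact LieSubmodule.lie_mem_lie (LieSubmodule.mem_top _) hv

theorem isNilpotent_of_lieRing_isNilpotent [LieRing.IsNilpotent I] : IsNilpotent I L := by
  obtain ⟨k, hk⟩ := IsNilpotent.nilpotent R I I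
  refine (I.isNilpotent_iff_exists_lcs_eq_bot L).mpr ⟨k + 1, ?_⟩
  simpa [hk] using I.lcs_succ_le_map_lowerCentralSeries k

variable (A M : Type*) [CommRing A] [Algebra R A] [AddCommGroup M] [Module R M]
  [LieRingModule L M] [LieModule R L M]

theorem lcs_baseChange (k : ℕ) :
    lcs (I.baseChange A) (A ⊗[R] M) k = (I.lcs M k).baseChange A := by
  induction k with
  | zero => simp
  | succ k ih => simp [ih, LieSubmodule.lie_baseChange]

instance [IsNilpotent I M] :
    IsNilpotent (I.baseChange A : LieIdeal A (A ⊗[R] L)) (A ⊗[R] M) := by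
  obtain ⟨k, hk⟩ := (I.isNilpotent_iff_exists_lcs_eq_bot M).mp inferInstance
  exact (isNilpotent_iff_exists_lcs_eq_bot _ _).mpr ⟨k, by simp [lcs_baseChange, hk]⟩

end LieIdeal

theorem LieModule.spectrum_toEnd_add_of_mem {K L M : Type*} [Field K] [LieRing L]
    [LieAlgebra K L] [AddCommGroup M] [Module K M] [FiniteDimensional K M] [LieRingModule L M]
    [LieModule K L M]
    (I : LieIdeal K L) [IsNilpotent I M] (X : L) {Y : L} (hY : Y ∈ I) :
    spectrum K (toEnd K L M (X + Y)) = spectrum K (toEnd K L M X) := by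
  obtain ⟨m, hm⟩ := (I.isNilpotent_iff_exists_lcs_eq_bot M).mp inferInstance
  have hinv : ∀ Z k, MapsTo (toEnd K L M Z) (I.lcs M k) (I.lcs M k) :=
    fun Z k _ hv ↦ (I.lcs M k).lie_mem hv
  refine Module.End.spectrum_eq_of_sub_mapsTo_succ (C := fun k ↦ (I.lcs M k).toSubmodule)
    (m := m) (by simp) (by simp [hm]) (hinv _) (hinv _) fun k v hv ↦ ?_
  rw [map_add, add_sub_cancel_left, LieIdeal.lcs_succ]
  exact LieSubmodule.lie_mem_lie hY hv

theorem stmt1_general (L : Type*) [LieRing L] [LieAlgebra ℝ L] [Module.Finite ℝ L]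
    (𝔫 : LieIdeal ℝ L) (hnil : LieRing.IsNilpotent ↥𝔫)
    (X Y : L) (hY : Y ∈ 𝔫) :
    spectrum ℂ (((LieAlgebra.ad ℝ L (X + Y)) : L →ₗ[ℝ] L).baseChange ℂ) =
      spectrum ℂ (((LieAlgebra.ad ℝ L X) : L →ₗ[ℝ] L).baseChange ℂ) := by
  have : IsNilpotent 𝔫 L := 𝔫.isNilpotent_of_lieRing_isNilpotent
  have h := spectrum_toEnd_add_of_mem (M := ℂ ⊗[ℝ] L)
    (𝔫.baseChange ℂ : LieIdeal ℂ (ℂ ⊗[ℝ] L)) (1 ⊗ₜ X)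
    (LieSubmodule.tmul_mem_baseChange_of_mem (1 : ℂ) hY)
  rwa [← tmul_add, toEnd_baseChange, toEnd_baseChange] at h

/-- Let `(𝔰, μ)` be a finite-dimensional solvable real Lie algebra with nilradical `𝔫`
(i.e. `𝔫` is a nilpotent ideal containing every nilpotent ideal). Then for every `X ∈ 𝔰`
and `Y ∈ 𝔫`, the endomorphisms `ad(X + Y)` and `ad(X)` have the same spectrum, i.e. the
same set of complex eigenvalues of their complexifications. -/
theorem stmt1 (L : Type*) [LieRing L] [LieAlgebra ℝ L] [Module.Finite ℝ L]
    [LieAlgebra.IsSolvable L]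
    (𝔫 : LieIdeal ℝ L) (hnil : LieRing.IsNilpotent ↥𝔫)
    (hmax : ∀ I : LieIdeal ℝ L, LieRing.IsNilpotent ↥I → I ≤ 𝔫)
    (X Y : L) (hY : Y ∈ 𝔫) :
    spectrum ℂ (((LieAlgebra.ad ℝ L (X + Y)) : L →ₗ[ℝ] L).baseChange ℂ) =
      spectrum ℂ (((LieAlgebra.ad ℝ L X) : L →ₗ[ℝ] L).baseChange ℂ) :=
  stmt1_general L 𝔫 hnil X Y hY
end

section
/- Let h : [0,∞) → GL(n,ℝ) be a C¹ curve satisfying h'(t) = δ(t)·h(t), h(0) = Id, where δ : [0,∞) → Sym(n,ℝ) is continuous and t ↦ ‖δ(t)‖_op is integrable on [0,∞). Then: (i) t ↦ ‖h(t)‖² is bounded on [0,∞); (ii) det(h(t)) converges to a positive limit as t → ∞; (iii) h(t) converges in GL(n,ℝ) as t → ∞. -/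
open scoped RealInnerProductSpace
open Filter

/-- Let `h : [0,∞) → GL(n,ℝ)` solve `h' = δ(t)·h`, `h(0) = Id`, where `δ(t)` is symmetric
and `t ↦ ‖δ(t)‖` (operator norm) is integrable on `[0,∞)`. Then `‖h(t)‖²` is bounded,
`det h(t)` converges to a positive limit, and `h(t)` converges in `GL(n,ℝ)` as `t → ∞`. -/
theorem stmt9 {n : ℕ}
    (h δ : ℝ → (EuclideanSpace ℝ (Fin n) →L[ℝ] EuclideanSpace ℝ (Fin n)))
    (hδcont : Continuous δ)
    (hδsym : ∀ t : ℝ, 0 ≤ t → ∀ x y : EuclideanSpace ℝ (Fin n), ⟪δ t x, y⟫ = ⟪x, δ t y⟫)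
    (hderiv : ∀ t : ℝ, 0 ≤ t → HasDerivAt h ((δ t).comp (h t)) t)
    (h0 : h 0 = ContinuousLinearMap.id ℝ (EuclideanSpace ℝ (Fin n)))
    (hint : MeasureTheory.IntegrableOn (fun t => ‖δ t‖) (Set.Ici (0 : ℝ))) :
    (∃ M : ℝ, ∀ t : ℝ, 0 ≤ t → ‖h t‖ ^ 2 ≤ M) ∧
    (∃ L > (0 : ℝ), Tendsto (fun t =>
        LinearMap.det ((h t : EuclideanSpace ℝ (Fin n) →ₗ[ℝ] EuclideanSpace ℝ (Fin n))))
      atTop (nhds L)) ∧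
    (∃ hinf : EuclideanSpace ℝ (Fin n) →L[ℝ] EuclideanSpace ℝ (Fin n),
      LinearMap.det ((hinf : EuclideanSpace ℝ (Fin n) →ₗ[ℝ] EuclideanSpace ℝ (Fin n))) ≠ 0 ∧
      Tendsto h atTop (nhds hinf)) := by
  classical
  have hδn : Continuous fun t : ℝ => ‖δ t‖ := hδcont.norm
  set C : ℝ := ∫ s in Set.Ioi (0 : ℝ), ‖δ s‖ with hCdef
  set ψ : ℝ → ℝ := fun t => ∫ s in (0 : ℝ)..t, ‖δ s‖ with hψdef
  have hψd : ∀ t : ℝ, HasDerivAt ψ ‖δ t‖ t := fun t =>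
    (hδn.integral_hasStrictDerivAt 0 t).hasDerivAt
  have hIoi : MeasureTheory.IntegrableOn (fun t : ℝ => ‖δ t‖) (Set.Ioi (0 : ℝ)) :=
    hint.mono_set Set.Ioi_subset_Ici_self
  have hψ_nonneg : ∀ t : ℝ, 0 ≤ t → 0 ≤ ψ t := fun t ht =>
    intervalIntegral.integral_nonneg ht fun s _ => norm_nonneg _
  have hψ_le : ∀ t : ℝ, 0 ≤ t → ψ t ≤ C := by
    intro t ht
    rw [hψdef]
    simp only []
    rw [intervalIntegral.integral_of_le ht]
    refine MeasureTheory.setIntegral_mono_set hIoi ?_ ?_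
    · exact MeasureTheory.ae_of_all _ fun s => norm_nonneg _
    · exact MeasureTheory.ae_of_all _ Set.Ioc_subset_Ioi_self
  have hC_nonneg : 0 ≤ C :=
    MeasureTheory.setIntegral_nonneg measurableSet_Ioi fun s _ => norm_nonneg _
  -- the key pointwise two-sided bound
  have key : ∀ x : EuclideanSpace ℝ (Fin n), ∀ t : ℝ, 0 ≤ t →
      ‖x‖ ^ 2 * Real.exp (-(2 * C)) ≤ ‖h t x‖ ^ 2 ∧
        ‖h t x‖ ^ 2 ≤ ‖x‖ ^ 2 * Real.exp (2 * C) := by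
    intro x t ht
    set u : ℝ → EuclideanSpace ℝ (Fin n) := fun s => h s x with hu
    have hud : ∀ s : ℝ, 0 ≤ s → HasDerivAt u (δ s (h s x)) s := by
      intro s hs
      have := (hderiv s hs).clm_apply (hasDerivAt_const s x)
      simpa using this
    have hfd : ∀ s : ℝ, 0 ≤ s →
        HasDerivAt (fun r => ‖u r‖ ^ 2) (2 * ⟪δ s (u s), u s⟫) s := by
      intro s hs
      have h1 : HasDerivAt (fun r => ⟪u r, u r⟫)
          (⟪u s, δ s (u s)⟫ + ⟪δ s (u s), u s⟫) s :=
        HasDerivAt.inner ℝ (hud s hs) (hud s hs)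
      have heq : (fun r => ‖u r‖ ^ 2) = fun r => ⟪u r, u r⟫ :=
        funext fun r => (real_inner_self_eq_norm_sq _).symm
      rw [heq]
      convert h1 using 1
      rw [real_inner_comm (u s) (δ s (u s))]
      ring
    have hbound : ∀ s : ℝ, 0 ≤ s → |2 * ⟪δ s (u s), u s⟫| ≤ 2 * ‖δ s‖ * ‖u s‖ ^ 2 := by
      intro s hs
      have h1 : |⟪δ s (u s), u s⟫| ≤ ‖δ s (u s)‖ * ‖u s‖ := abs_real_inner_le_norm _ _
      have h2 : ‖δ s (u s)‖ ≤ ‖δ s‖ * ‖u s‖ := (δ s).le_opNorm _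
      have h3 : (0:ℝ) ≤ ‖u s‖ := norm_nonneg _
      rw [abs_mul, abs_two]
      nlinarith [abs_nonneg (⟪δ s (u s), u s⟫)]
    -- upper bound via monotonicity of G
    have hGd : ∀ s : ℝ, 0 ≤ s → HasDerivAt (fun r => ‖u r‖ ^ 2 * Real.exp (-(2 * ψ r)))
        ((2 * ⟪δ s (u s), u s⟫) * Real.exp (-(2 * ψ s)) +
          ‖u s‖ ^ 2 * (Real.exp (-(2 * ψ s)) * (-(2 * ‖δ s‖)))) s := by
      intro s hs
      exact (hfd s hs).mul (((hψd s).const_mul 2).neg.exp)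
    have hG_anti : AntitoneOn (fun r => ‖u r‖ ^ 2 * Real.exp (-(2 * ψ r))) (Set.Ici 0) := by
      refine antitoneOn_of_deriv_nonpos (convex_Ici 0) ?_ ?_ ?_
      · exact fun s hs => (hGd s hs).continuousAt.continuousWithinAt
      · intro s hs
        rw [interior_Ici] at hs
        exact (hGd s hs.le).differentiableAt.differentiableWithinAt
      · intro s hs
        rw [interior_Ici] at hs
        rw [(hGd s hs.le).deriv]
        have hb := hbound s hs.le
        have he : (0:ℝ) < Real.exp (-(2 * ψ s)) := Real.exp_pos _
        nlinarith [abs_le.mp hb]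
    have hHd : ∀ s : ℝ, 0 ≤ s → HasDerivAt (fun r => ‖u r‖ ^ 2 * Real.exp (2 * ψ r))
        ((2 * ⟪δ s (u s), u s⟫) * Real.exp (2 * ψ s) +
          ‖u s‖ ^ 2 * (Real.exp (2 * ψ s) * (2 * ‖δ s‖))) s := by
      intro s hs
      exact (hfd s hs).mul (((hψd s).const_mul 2).exp)
    have hH_mono : MonotoneOn (fun r => ‖u r‖ ^ 2 * Real.exp (2 * ψ r)) (Set.Ici 0) := by
      refine monotoneOn_of_deriv_nonneg (convex_Ici 0) ?_ ?_ ?_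
      · exact fun s hs => (hHd s hs).continuousAt.continuousWithinAt
      · intro s hs
        rw [interior_Ici] at hs
        exact (hHd s hs.le).differentiableAt.differentiableWithinAt
      · intro s hs
        rw [interior_Ici] at hs
        rw [(hHd s hs.le).deriv]
        have hb := hbound s hs.le
        have he : (0:ℝ) < Real.exp (2 * ψ s) := Real.exp_pos _
        nlinarith [abs_le.mp hb]
    have hu0 : u 0 = x := by show h 0 x = x; rw [h0]; rfl
    have hψ0 : ψ 0 = 0 := intervalIntegral.integral_same
    constructor
    · -- lower bound
      have h1 := hH_mono (Set.self_mem_Ici) (Set.mem_Ici.2 ht) ht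
      simp only [hu0, hψ0, mul_zero, Real.exp_zero, mul_one] at h1
      -- h1 : ‖x‖^2 ≤ ‖u t‖^2 * exp (2 ψ t)
      have h2 : ‖x‖ ^ 2 * Real.exp (-(2 * ψ t)) ≤ ‖u t‖ ^ 2 := by
        have he : (0:ℝ) < Real.exp (2 * ψ t) := Real.exp_pos _
        rw [Real.exp_neg]
        rw [mul_inv_le_iff₀ he]
        linarith
      refine le_trans ?_ h2
      have : Real.exp (-(2 * C)) ≤ Real.exp (-(2 * ψ t)) :=
        Real.exp_le_exp.2 (by have := hψ_le t ht; linarith)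
      nlinarith [sq_nonneg ‖x‖]
    · -- upper bound
      have h1 := hG_anti (Set.self_mem_Ici) (Set.mem_Ici.2 ht) ht
      simp only [hu0, hψ0, mul_zero, neg_zero, Real.exp_zero, mul_one] at h1
      -- h1 : ‖u t‖^2 * exp (-(2 ψ t)) ≤ ‖x‖^2
      have h2 : ‖u t‖ ^ 2 ≤ ‖x‖ ^ 2 * Real.exp (2 * ψ t) := by
        have he : (0:ℝ) < Real.exp (2 * ψ t) := Real.exp_pos _
        rw [Real.exp_neg] at h1
        rw [mul_inv_le_iff₀ he] at h1
        linarith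
      refine h2.trans ?_
      have : Real.exp (2 * ψ t) ≤ Real.exp (2 * C) :=
        Real.exp_le_exp.2 (by have := hψ_le t ht; linarith)
      nlinarith [sq_nonneg ‖x‖]
  -- operator norm bound
  have hop : ∀ t : ℝ, 0 ≤ t → ‖h t‖ ≤ Real.exp C := by
    intro t ht
    refine ContinuousLinearMap.opNorm_le_bound _ (Real.exp_pos C).le fun x => ?_
    have h2 := (key x t ht).2
    have hee : Real.exp (2 * C) = Real.exp C * Real.exp C := by
      rw [two_mul, Real.exp_add]
    have h3 : ‖h t x‖ ^ 2 ≤ (Real.exp C * ‖x‖) ^ 2 := by nlinarith [norm_nonneg x]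
    have h4 := Real.sqrt_le_sqrt h3
    rwa [Real.sqrt_sq (norm_nonneg _), Real.sqrt_sq (by positivity)] at h4
  -- injectivity criterion
  have hdet_ne : ∀ A : EuclideanSpace ℝ (Fin n) →L[ℝ] EuclideanSpace ℝ (Fin n),
      (∀ x, ‖x‖ ^ 2 * Real.exp (-(2 * C)) ≤ ‖A x‖ ^ 2) →
      LinearMap.det ((A : EuclideanSpace ℝ (Fin n) →ₗ[ℝ] EuclideanSpace ℝ (Fin n))) ≠ 0 := by
    intro A hA hdet
    obtain ⟨x, hxmem, hx0⟩ := Submodule.exists_mem_ne_zero_of_ne_bot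
      (LinearMap.bot_lt_ker_of_det_eq_zero hdet).ne'
    have hAx : A x = 0 := hxmem
    have := hA x
    rw [hAx] at this
    simp only [norm_zero] at this
    have hx : (0:ℝ) < ‖x‖ := norm_pos_iff.2 hx0
    have hpos : (0:ℝ) < ‖x‖ ^ 2 * Real.exp (-(2 * C)) := by positivity
    nlinarith
  -- continuity of h on [0,∞)
  have hconth : ContinuousOn h (Set.Ici 0) := fun t ht =>
    (hderiv t ht).continuousAt.continuousWithinAt
  have hh'cont : ContinuousOn (fun t => (δ t).comp (h t)) (Set.Ici (0:ℝ)) :=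
    hδcont.continuousOn.clm_comp hconth
  -- integrability of the derivative
  have hInt' : MeasureTheory.IntegrableOn (fun t => (δ t).comp (h t)) (Set.Ici (0:ℝ)) := by
    refine MeasureTheory.Integrable.mono' (hint.const_mul (Real.exp C))
      (hh'cont.aestronglyMeasurable measurableSet_Ici) ?_
    refine (MeasureTheory.ae_restrict_iff' measurableSet_Ici).2
      (MeasureTheory.ae_of_all _ fun t ht => ?_)
    calc ‖(δ t).comp (h t)‖ ≤ ‖δ t‖ * ‖h t‖ := ContinuousLinearMap.opNorm_comp_le _ _
      _ ≤ Real.exp C * ‖δ t‖ := by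
          have := hop t ht
          have hn : (0:ℝ) ≤ ‖δ t‖ := norm_nonneg _
          nlinarith
  have hIoi' : MeasureTheory.IntegrableOn (fun t => (δ t).comp (h t)) (Set.Ioi (0:ℝ)) :=
    hInt'.mono_set Set.Ioi_subset_Ici_self
  set hinf : EuclideanSpace ℝ (Fin n) →L[ℝ] EuclideanSpace ℝ (Fin n) :=
    h 0 + ∫ s in Set.Ioi (0:ℝ), (δ s).comp (h s) with hinfdef
  have hFTC : ∀ t : ℝ, 0 ≤ t → h t = h 0 + ∫ s in (0:ℝ)..t, (δ s).comp (h s) := by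
    intro t ht
    have hiq : Set.uIcc (0:ℝ) t = Set.Icc 0 t := Set.uIcc_of_le ht
    have hsub : Set.Icc (0:ℝ) t ⊆ Set.Ici 0 := Set.Icc_subset_Ici_self
    have := intervalIntegral.integral_eq_sub_of_hasDerivAt
      (f := h) (f' := fun s => (δ s).comp (h s))
      (fun s hs => hderiv s (by rw [hiq] at hs; exact hs.1))
      (by
        apply ContinuousOn.intervalIntegrable
        rw [hiq]
        exact hh'cont.mono hsub)
    rw [this]
    abel
  have htends : Tendsto h atTop (nhds hinf) := by
    have h1 := MeasureTheory.intervalIntegral_tendsto_integral_Ioi 0 hIoi'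
      (tendsto_id (α := ℝ))
    have h2 : Tendsto (fun t : ℝ => h 0 + ∫ s in (0:ℝ)..t, (δ s).comp (h s)) atTop
        (nhds hinf) := by
      rw [hinfdef]
      exact tendsto_const_nhds.add h1
    refine h2.congr' ?_
    filter_upwards [eventually_ge_atTop (0:ℝ)] with t ht
    exact (hFTC t ht).symm
  -- lower bound for the limit
  have hlow : ∀ x : EuclideanSpace ℝ (Fin n),
      ‖x‖ ^ 2 * Real.exp (-(2 * C)) ≤ ‖hinf x‖ ^ 2 := by
    intro x
    have happ : Tendsto (fun t => h t x) atTop (nhds (hinf x)) :=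
      ((ContinuousLinearMap.apply ℝ (EuclideanSpace ℝ (Fin n)) x).continuous.tendsto
        hinf).comp htends
    have hnorm : Tendsto (fun t => ‖h t x‖ ^ 2) atTop (nhds (‖hinf x‖ ^ 2)) :=
      (happ.norm).pow 2
    refine ge_of_tendsto hnorm ?_
    filter_upwards [eventually_ge_atTop (0:ℝ)] with t ht
    exact (key x t ht).1
  have hinfdet : LinearMap.det
      ((hinf : EuclideanSpace ℝ (Fin n) →ₗ[ℝ] EuclideanSpace ℝ (Fin n))) ≠ 0 :=
    hdet_ne hinf hlow
  -- determinant along the path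
  have hdetcont : Continuous fun A : EuclideanSpace ℝ (Fin n) →L[ℝ] EuclideanSpace ℝ (Fin n) =>
      LinearMap.det ((A : EuclideanSpace ℝ (Fin n) →ₗ[ℝ] EuclideanSpace ℝ (Fin n))) :=
    ContinuousLinearMap.continuous_det
  have hdet_ne_t : ∀ t : ℝ, 0 ≤ t → LinearMap.det
      ((h t : EuclideanSpace ℝ (Fin n) →ₗ[ℝ] EuclideanSpace ℝ (Fin n))) ≠ 0 :=
    fun t ht => hdet_ne (h t) fun x => (key x t ht).1
  have hdet0 : LinearMap.det
      ((h 0 : EuclideanSpace ℝ (Fin n) →ₗ[ℝ] EuclideanSpace ℝ (Fin n))) = 1 := by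
    rw [h0]
    simp
  have hdetpos : ∀ t : ℝ, 0 ≤ t → 0 < LinearMap.det
      ((h t : EuclideanSpace ℝ (Fin n) →ₗ[ℝ] EuclideanSpace ℝ (Fin n))) := by
    intro t ht
    by_contra hneg
    push_neg at hneg
    have hlt : LinearMap.det
        ((h t : EuclideanSpace ℝ (Fin n) →ₗ[ℝ] EuclideanSpace ℝ (Fin n))) < 0 :=
      lt_of_le_of_ne hneg (hdet_ne_t t ht)
    have hgc : ContinuousOn (fun s => LinearMap.det
        ((h s : EuclideanSpace ℝ (Fin n) →ₗ[ℝ] EuclideanSpace ℝ (Fin n)))) (Set.Icc 0 t) :=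
      (hdetcont.comp_continuousOn (hconth.mono Set.Icc_subset_Ici_self))
    have := intermediate_value_Icc' ht hgc
    have h0mem : (0:ℝ) ∈ Set.Icc (LinearMap.det
        ((h t : EuclideanSpace ℝ (Fin n) →ₗ[ℝ] EuclideanSpace ℝ (Fin n))))
        (LinearMap.det ((h 0 : EuclideanSpace ℝ (Fin n) →ₗ[ℝ]
          EuclideanSpace ℝ (Fin n)))) := by
      rw [hdet0]
      exact ⟨hlt.le, zero_le_one⟩
    obtain ⟨s, hs, hgs⟩ := this h0mem
    exact hdet_ne_t s hs.1 hgs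
  have hdettends : Tendsto (fun t => LinearMap.det
      ((h t : EuclideanSpace ℝ (Fin n) →ₗ[ℝ] EuclideanSpace ℝ (Fin n)))) atTop
      (nhds (LinearMap.det
        ((hinf : EuclideanSpace ℝ (Fin n) →ₗ[ℝ] EuclideanSpace ℝ (Fin n))))) :=
    (hdetcont.tendsto hinf).comp htends
  have hLpos : 0 < LinearMap.det
      ((hinf : EuclideanSpace ℝ (Fin n) →ₗ[ℝ] EuclideanSpace ℝ (Fin n))) := by
    have hLnonneg : 0 ≤ LinearMap.det
        ((hinf : EuclideanSpace ℝ (Fin n) →ₗ[ℝ] EuclideanSpace ℝ (Fin n))) := by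
      refine ge_of_tendsto hdettends ?_
      filter_upwards [eventually_ge_atTop (0:ℝ)] with t ht
      exact (hdetpos t ht).le
    exact lt_of_le_of_ne hLnonneg (Ne.symm hinfdet)
  refine ⟨⟨Real.exp C ^ 2, fun t ht => ?_⟩,
    ⟨LinearMap.det ((hinf : EuclideanSpace ℝ (Fin n) →ₗ[ℝ] EuclideanSpace ℝ (Fin n))),
      hLpos, hdettends⟩, ⟨hinf, hinfdet, htends⟩⟩
  exact pow_le_pow_left₀ (norm_nonneg _) (hop t ht) 2
end
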